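/- Let {x, x₁} be a Bertrand D-pair with constant λ ≠ 0, correspondence s and angle function θ. If x is a geodesic (k_g ≡ 0), then for every s₁ the geodesic curvature of x₁ is k_{g₁}(s₁) = λ τ_g(s(s₁))² · (cos θ(s₁) − λ τ_g(s(s₁)) sin θ(s₁)) · (s'(s₁))³. -/

import Mathlib

noncomputable section

abbrev E3 := EuclideanSpace ℝ (Fin 3)

/-- Cross product on `EuclideanSpace ℝ (Fin 3)`. -/
def cross3 (a b : E3) : E3 :=
  WithLp.toLp 2 ![a 1 * b 2 - a 2 * b 1, a 2 * b 0 - a 0 * b 2, a 0 * b 1 - a 1 * b 0]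

/-- Darboux frame vector `g = n × T`, where `T = x'`. -/
def gvec (x n : ℝ → E3) : ℝ → E3 := fun t => cross3 (n t) (deriv x t)

/-- Geodesic curvature `k_g = ⟪T', g⟫`. -/
def geodCurv (x n : ℝ → E3) : ℝ → ℝ := fun t => (inner ℝ (deriv (deriv x) t) (gvec x n t) : ℝ)

/-- Normal curvature `k_n = ⟪T', n⟫`. -/
def normCurv (x n : ℝ → E3) : ℝ → ℝ := fun t => (inner ℝ (deriv (deriv x) t) (n t) : ℝ)

/-- Geodesic torsion `τ_g = ⟪g', n⟫`. -/
def geodTors (x n : ℝ → E3) : ℝ → ℝ := fun t => (inner ℝ (deriv (gvec x n) t) (n t) : ℝ)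

/-- A unit-speed smooth curve `x` on an oriented surface, encoded by a smooth unit
normal field `n` along `x` orthogonal to the tangent. -/
def IsDarbouxCurve (x n : ℝ → E3) : Prop :=
  ContDiff ℝ (⊤ : ℕ∞) x ∧ ContDiff ℝ (⊤ : ℕ∞) n ∧ (∀ t, ‖deriv x t‖ = 1) ∧ (∀ t, ‖n t‖ = 1) ∧
    ∀ t, (inner ℝ (n t) (deriv x t) : ℝ) = 0

/-- `{x, x₁}` is a Bertrand D-pair with constant `lam ≠ 0`, smooth increasing
correspondence `s` and smooth angle function `θ`. -/
def IsBertrandDPair (x n x₁ n₁ : ℝ → E3) (lam : ℝ) (s θ : ℝ → ℝ) : Prop :=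
  IsDarbouxCurve x n ∧ IsDarbouxCurve x₁ n₁ ∧ lam ≠ 0 ∧
    ContDiff ℝ (⊤ : ℕ∞) s ∧ (∀ t, 0 < deriv s t) ∧
    (∀ t, x (s t) = x₁ t + lam • gvec x₁ n₁ t) ∧
    (∀ t, gvec x n (s t) = gvec x₁ n₁ t) ∧
    ContDiff ℝ (⊤ : ℕ∞) θ ∧
    (∀ t, deriv x (s t) = Real.cos (θ t) • deriv x₁ t - Real.sin (θ t) • n₁ t) ∧
    (∀ t, n (s t) = Real.sin (θ t) • deriv x₁ t + Real.cos (θ t) • n₁ t)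

/- ### Auxiliary lemmas -/

lemma cross3_inner_left (a b : E3) : (inner ℝ (cross3 a b) a : ℝ) = 0 := by
  simp [cross3, PiLp.inner_apply, Fin.sum_univ_three, RCLike.inner_apply]
  ring

lemma cross3_inner_right (a b : E3) : (inner ℝ (cross3 a b) b : ℝ) = 0 := by
  simp [cross3, PiLp.inner_apply, Fin.sum_univ_three, RCLike.inner_apply]
  ring

lemma contDiff_apply3 {f : ℝ → E3} (h : ContDiff ℝ (⊤:ℕ∞) f) (i : Fin 3) :
    ContDiff ℝ (⊤:ℕ∞) (fun t => f t i) :=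
  ((EuclideanSpace.proj i).contDiff.comp h : )

lemma contDiff_cross3 {f g : ℝ → E3} (hf : ContDiff ℝ (⊤:ℕ∞) f) (hg : ContDiff ℝ (⊤:ℕ∞) g) :
    ContDiff ℝ (⊤:ℕ∞) (fun t => cross3 (f t) (g t)) := by
  have h2 : ContDiff ℝ (⊤:ℕ∞) (fun t => (EuclideanSpace.equiv (Fin 3) ℝ) (cross3 (f t) (g t))) := by
    apply contDiff_pi.2
    intro i
    fin_cases i
    · show ContDiff ℝ (⊤:ℕ∞) (fun t => f t 1 * g t 2 - f t 2 * g t 1)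
      exact ((contDiff_apply3 hf _).mul (contDiff_apply3 hg _)).sub
        ((contDiff_apply3 hf _).mul (contDiff_apply3 hg _))
    · show ContDiff ℝ (⊤:ℕ∞) (fun t => f t 2 * g t 0 - f t 0 * g t 2)
      exact ((contDiff_apply3 hf _).mul (contDiff_apply3 hg _)).sub
        ((contDiff_apply3 hf _).mul (contDiff_apply3 hg _))
    · show ContDiff ℝ (⊤:ℕ∞) (fun t => f t 0 * g t 1 - f t 1 * g t 0)
      exact ((contDiff_apply3 hf _).mul (contDiff_apply3 hg _)).sub
        ((contDiff_apply3 hf _).mul (contDiff_apply3 hg _))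
  exact (ContinuousLinearEquiv.comp_contDiff_iff _).mp h2

/-- `gvec` of a Darboux curve is smooth. -/
lemma contDiff_gvec {x n : ℝ → E3} (h : IsDarbouxCurve x n) :
    ContDiff ℝ (⊤:ℕ∞) (gvec x n) := by
  obtain ⟨hx, hn, -, -, -⟩ := h
  exact contDiff_cross3 (hn.of_le (by simp))
    ((contDiff_infty_iff_deriv.mp (hx.of_le (by simp))).2)

/-- `⟪g'(t), T(t)⟫ = -k_g(t)`. -/
lemma inner_deriv_gvec_tangent {x n : ℝ → E3} (h : IsDarbouxCurve x n) (t : ℝ) :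
    (inner ℝ (deriv (gvec x n) t) (deriv x t) : ℝ) = - geodCurv x n t := by
  have hg : Differentiable ℝ (gvec x n) := (contDiff_gvec h).differentiable (by simp)
  have hT : Differentiable ℝ (deriv x) :=
    ((contDiff_infty_iff_deriv.mp (h.1.of_le (by simp))).2).differentiable (by simp)
  have h1 : HasDerivAt (fun u => (inner ℝ (gvec x n u) (deriv x u) : ℝ))
      ((inner ℝ (gvec x n t) (deriv (deriv x) t) : ℝ) + (inner ℝ (deriv (gvec x n) t) (deriv x t) : ℝ))
      t := (hg t).hasDerivAt.inner ℝ (hT t).hasDerivAt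
  have h2 : (fun u => (inner ℝ (gvec x n u) (deriv x u) : ℝ)) = fun _ => (0:ℝ) :=
    funext fun u => cross3_inner_right _ _
  have h3 : HasDerivAt (fun u => (inner ℝ (gvec x n u) (deriv x u) : ℝ)) 0 t := by
    rw [h2]; exact hasDerivAt_const t 0
  have := h1.unique h3
  have hcomm : (inner ℝ (gvec x n t) (deriv (deriv x) t) : ℝ) = geodCurv x n t :=
    real_inner_comm _ _
  linarith [this, hcomm]

theorem bertrand_D_stmt_15
    (x n x₁ n₁ : ℝ → E3) (lam : ℝ) (s θ : ℝ → ℝ)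
    (hpair : IsBertrandDPair x n x₁ n₁ lam s θ)
    (hgeo : ∀ t, geodCurv x n t = 0) :
    ∀ t, geodCurv x₁ n₁ t =
      lam * (geodTors x n (s t)) ^ 2 * (Real.cos (θ t) - lam * geodTors x n (s t) * Real.sin (θ t)) *
        (deriv s t) ^ 3 := by
  obtain ⟨hx, hx1, hlam, hs, hspos, hposn, hgg, hθ, hTT, hnn⟩ := hpair
  intro t
  -- abbreviations
  set p := deriv s t with hp
  set c := Real.cos (θ t) with hc
  set si := Real.sin (θ t) with hsi
  set k₁ := geodCurv x₁ n₁ t with hk₁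
  set τ₁ := geodTors x₁ n₁ t with hτ₁
  set τ := geodTors x n (s t) with hτ
  have hppos : 0 < p := hspos t
  -- differentiability facts
  have hxd : Differentiable ℝ x := hx.1.differentiable (by simp)
  have hTd : Differentiable ℝ (deriv x) :=
    ((contDiff_infty_iff_deriv.mp (hx.1.of_le (by simp))).2).differentiable (by simp)
  have hT1d : Differentiable ℝ (deriv x₁) :=
    ((contDiff_infty_iff_deriv.mp (hx1.1.of_le (by simp))).2).differentiable (by simp)
  have hx1d : Differentiable ℝ x₁ := hx1.1.differentiable (by simp)
  have hgd : Differentiable ℝ (gvec x n) := (contDiff_gvec hx).differentiable (by simp)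
  have hg1d : Differentiable ℝ (gvec x₁ n₁) := (contDiff_gvec hx1).differentiable (by simp)
  have hsd : Differentiable ℝ s := hs.differentiable (by simp)
  -- unit and orthogonality facts for curve 1
  have hT1T1 : (inner ℝ (deriv x₁ t) (deriv x₁ t) : ℝ) = 1 := by
    rw [real_inner_self_eq_norm_sq, hx1.2.2.1 t]; norm_num
  have hn1n1 : (inner ℝ (n₁ t) (n₁ t) : ℝ) = 1 := by
    rw [real_inner_self_eq_norm_sq, hx1.2.2.2.1 t]; norm_num
  have hn1T1 : (inner ℝ (n₁ t) (deriv x₁ t) : ℝ) = 0 := hx1.2.2.2.2 t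
  have hT1n1 : (inner ℝ (deriv x₁ t) (n₁ t) : ℝ) = 0 := by
    rw [real_inner_comm]; exact hn1T1
  -- ⟪g₁', T₁⟫ = -k₁ and ⟪g₁', n₁⟫ = τ₁
  have hg1T1 : (inner ℝ (deriv (gvec x₁ n₁) t) (deriv x₁ t) : ℝ) = - k₁ :=
    inner_deriv_gvec_tangent hx1 t
  have hg1n1 : (inner ℝ (deriv (gvec x₁ n₁) t) (n₁ t) : ℝ) = τ₁ := rfl
  -- chain rules
  have hsT : HasDerivAt (fun u => x (s u)) (p • deriv x (s t)) t :=
    (hxd (s t)).hasDerivAt.scomp t (hsd t).hasDerivAt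
  have hsg : HasDerivAt (fun u => gvec x n (s u)) (p • deriv (gvec x n) (s t)) t :=
    (hgd (s t)).hasDerivAt.scomp t (hsd t).hasDerivAt
  -- equation A : p • T(s t) = T₁ t + lam • g₁' t
  have hA : p • deriv x (s t) = deriv x₁ t + lam • deriv (gvec x₁ n₁) t := by
    have h1 : (fun u => x (s u)) = fun u => x₁ u + lam • gvec x₁ n₁ u := funext hposn
    have h2 : HasDerivAt (fun u => x₁ u + lam • gvec x₁ n₁ u)
        (deriv x₁ t + lam • deriv (gvec x₁ n₁) t) t :=
      (hx1d t).hasDerivAt.add ((hg1d t).hasDerivAt.const_smul lam)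
    exact (h1 ▸ hsT).unique h2
  -- equation B : p • g'(s t) = g₁' t
  have hB : p • deriv (gvec x n) (s t) = deriv (gvec x₁ n₁) t := by
    have h1 : (fun u => gvec x n (s u)) = gvec x₁ n₁ := funext hgg
    have h2 : HasDerivAt (gvec x₁ n₁) (deriv (gvec x₁ n₁) t) t := (hg1d t).hasDerivAt
    exact (h1 ▸ hsg).unique h2
  -- T(s t) expressed in frame 1
  have hTf : deriv x (s t) = c • deriv x₁ t - si • n₁ t := hTT t
  have hnf : n (s t) = si • deriv x₁ t + c • n₁ t := hnn t
  -- scalar equation e1 : p * c = 1 - lam * k₁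
  have e1 : p * c = 1 - lam * k₁ := by
    have := congrArg (fun v => (inner ℝ v (deriv x₁ t) : ℝ)) hA
    simp only [hTf, inner_add_left, inner_sub_left, real_inner_smul_left] at this
    rw [hT1T1, hn1T1, hg1T1] at this
    ring_nf at this ⊢
    linarith [this]
  -- scalar equation e2 : -(p * si) = lam * τ₁
  have e2 : -(p * si) = lam * τ₁ := by
    have := congrArg (fun v => (inner ℝ v (n₁ t) : ℝ)) hA
    simp only [hTf, inner_add_left, inner_sub_left, real_inner_smul_left] at this
    rw [hT1n1, hn1n1, hg1n1] at this
    ring_nf at this ⊢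
    linarith [this]
  -- ⟪g'(s t), T(s t)⟫ = 0 since x is a geodesic
  have hgT0 : (inner ℝ (deriv (gvec x n) (s t)) (deriv x (s t)) : ℝ) = 0 := by
    rw [inner_deriv_gvec_tangent hx (s t), hgeo (s t)]; ring
  -- scalar equation e3 : 0 = c * (-k₁) - si * τ₁
  have e3 : 0 = c * (-k₁) - si * τ₁ := by
    have h0 : (inner ℝ (deriv (gvec x₁ n₁) t) (deriv x (s t)) : ℝ) = c * (-k₁) - si * τ₁ := by
      rw [hTf, inner_sub_right, real_inner_smul_right, real_inner_smul_right, hg1T1, hg1n1]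
    have h1 : (inner ℝ (deriv (gvec x₁ n₁) t) (deriv x (s t)) : ℝ) = 0 := by
      rw [← hB, real_inner_smul_left, hgT0]; ring
    linarith [h0, h1]
  -- scalar equation e4 : p * τ = si * (-k₁) + c * τ₁
  have e4 : p * τ = si * (-k₁) + c * τ₁ := by
    have h0 : (inner ℝ (deriv (gvec x₁ n₁) t) (n (s t)) : ℝ) = si * (-k₁) + c * τ₁ := by
      rw [hnf, inner_add_right, real_inner_smul_right, real_inner_smul_right, hg1T1, hg1n1]
    have h1 : (inner ℝ (deriv (gvec x₁ n₁) t) (n (s t)) : ℝ) = p * τ := by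
      rw [← hB, real_inner_smul_left]; rfl
    linarith [h0, h1]
  have e5 : si ^ 2 + c ^ 2 = 1 := by
    rw [hsi, hc]; exact Real.sin_sq_add_cos_sq (θ t)
  -- algebra
  have erot1 : k₁ = -(p * τ * si) := by linear_combination c * e3 + si * e4 - k₁ * e5
  have erot2 : τ₁ = p * τ * c := by linear_combination si * e3 - c * e4 - τ₁ * e5
  have hsieq : si = -(lam * τ * c) := by
    have h6 : p * si = p * (-(lam * τ * c)) := by linear_combination -e2 - lam * erot2
    exact mul_left_cancel₀ (ne_of_gt hppos) h6
  have hc2 : c ^ 2 * (1 + lam ^ 2 * τ ^ 2) = 1 := by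
    linear_combination e5 - (si - lam * τ * c) * hsieq
  have hcne : c ≠ 0 := by
    intro h0
    rw [h0] at hc2; simp at hc2
  have hpc : p * c * (1 + lam ^ 2 * τ ^ 2) = 1 := by
    linear_combination e1 - lam * erot1 + lam * p * τ * hsieq
  have hpeq : p = c := by
    have h7 : (p - c) * (c * (1 + lam ^ 2 * τ ^ 2)) = 0 := by linear_combination hpc - hc2
    have h8 : c * (1 + lam ^ 2 * τ ^ 2) ≠ 0 := by
      intro h9
      rw [mul_comm] at h9
      nlinarith [hc2, sq_nonneg c]
    have := mul_eq_zero.mp h7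
    rcases this with h | h
    · linarith
    · exact absurd h h8
  show k₁ = lam * τ ^ 2 * (c - lam * τ * si) * p ^ 3
  rw [erot1, hsieq, hpeq]
  have : lam * τ ^ 2 * (c - lam * τ * -(lam * τ * c)) * c ^ 3
      = lam * τ ^ 2 * c ^ 2 * (c ^ 2 * (1 + lam ^ 2 * τ ^ 2)) := by ring
  rw [this, hc2]
  ring
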